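/- arXiv:2309.06083 — 5 statements merged into one kernel-verified Lean document; each statement's English description precedes it below -/
import Mathlib

section
/- Let f, g, h : D → ℝ ∪ {−∞} be functions on a Hausdorff topological space D, with f and g extended continuous and h locally upper bounded. Let A ⊆ B ⊆ D with A nonempty and compact, and suppose f(t) < g(t) for all t ∈ A. Then sup_A (f+h) < sup_B (g+h), unless h ≡ −∞ on A. -/
open Filter Topology

/-!
By compactness of `A`, two uniform bounds hold on `A`, each obtained from a directed open cover:
a real gap `f + ε < g` with `ε > 0`, and a real upper bound for `f + h`. Hence
`sup_A (f + h) ≤ sup_B (g + h) - ε` and `sup_A (f + h) < ⊤`, while a point of `A` where `h ≠ ⊥`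
gives `sup_B (g + h) > ⊥`. In `EReal` these three facts force the strict inequality.
-/

namespace EReal

theorem continuous_add_coe (c : ℝ) : Continuous fun x : EReal => x + c :=
  continuous_iff_continuousAt.2 fun _ =>
    (continuousAt_add (Or.inr (coe_ne_bot c)) (Or.inr (coe_ne_top c))).comp
      (continuous_id.prodMk continuous_const).continuousAt

theorem exists_pos_add_lt {x y : EReal} (h : x < y) : ∃ ε : ℝ, 0 < ε ∧ x + ε < y := by
  obtain ⟨c, hxc, hcy⟩ := exists_between_coe_real h
  obtain ⟨d, hcd, hdy⟩ := exists_between_coe_real hcy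
  refine ⟨d - c, _root_.sub_pos.2 (EReal.coe_lt_coe_iff.1 hcd), ?_⟩
  calc x + ↑(d - c) < ↑c + ↑(d - c) := add_lt_add_right_coe hxc _
    _ = d := by rw [← coe_add, add_sub_cancel]
    _ < y := hdy

theorem lt_of_le_coe_of_le_sub {x y : EReal} {C ε : ℝ} (hε : 0 < ε) (hy : y ≠ ⊥)
    (hxC : x ≤ C) (hxy : x ≤ y - ε) : x < y := by
  induction y with
  | bot => exact absurd rfl hy
  | top => exact hxC.trans_lt (coe_lt_top C)
  | coe r =>
    refine hxy.trans_lt ?_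
    rw [← coe_sub, EReal.coe_lt_coe_iff]
    linarith

end EReal

section Compact

variable {X : Type*} [TopologicalSpace X] {K : Set X}

theorem IsCompact.exists_forall_le_coe_of_eventually_le {u : X → EReal} (hK : IsCompact K)
    (hu : ∀ x ∈ K, ∃ M : ℝ, ∀ᶠ y in 𝓝 x, u y ≤ M) : ∃ M : ℝ, ∀ y ∈ K, u y ≤ M := by
  obtain ⟨M, hM⟩ := hK.elim_directed_cover (fun M : ℝ => interior {y | u y ≤ M})
    (fun _ => isOpen_interior)
    (fun x hx => by
      obtain ⟨M, hM⟩ := hu x hx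
      exact Set.mem_iUnion.2 ⟨M, mem_interior_iff_mem_nhds.2 hM⟩)
    (Monotone.directed_le fun _ _ hMN => interior_mono fun _ hy =>
      hy.trans (EReal.coe_le_coe_iff.2 hMN))
  exact ⟨M, fun y hy => interior_subset (s := {y | u y ≤ M}) (hM hy)⟩

theorem IsCompact.exists_pos_forall_add_lt {f g : X → EReal} (hK : IsCompact K)
    (hf : Continuous f) (hg : Continuous g) (hfg : ∀ t ∈ K, f t < g t) :
    ∃ ε : ℝ, 0 < ε ∧ ∀ t ∈ K, f t + ε < g t := by
  have : Nonempty (Set.Ioi (0 : ℝ)) := ⟨⟨1, Set.mem_Ioi.2 one_pos⟩⟩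
  obtain ⟨⟨ε, hε⟩, hK_sub⟩ := hK.elim_directed_cover
    (fun ε : Set.Ioi (0 : ℝ) => {t | f t + ε < g t})
    (fun ε => isOpen_lt ((EReal.continuous_add_coe ε).comp hf) hg)
    (fun t ht => by
      obtain ⟨ε, hε, hlt⟩ := EReal.exists_pos_add_lt (hfg t ht)
      exact Set.mem_iUnion.2 ⟨⟨ε, hε⟩, hlt⟩)
    (Antitone.directed_le fun _ _ hεδ _ ht =>
      (add_le_add_right (EReal.coe_le_coe_iff.2 hεδ) _).trans_lt ht)
  exact ⟨ε, hε, hK_sub⟩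

end Compact

theorem trivial_lemma_continuous_general {D : Type*} [TopologicalSpace D]
    (f g h : D → EReal)
    (hf : Continuous f) (hg : Continuous g)
    (hloc : ∀ x : D, ∃ M : ℝ, ∀ᶠ y in 𝓝 x, h y ≤ (M : EReal))
    (A B : Set D) (hAB : A ⊆ B) (hAc : IsCompact A)
    (hfg : ∀ t ∈ A, f t < g t)
    (hnot : ¬ ∀ t ∈ A, h t = ⊥) :
    (⨆ t ∈ A, (f t + h t)) < ⨆ t ∈ B, (g t + h t) := by
  obtain ⟨t₀, ht₀A, ht₀⟩ : ∃ t ∈ A, h t ≠ ⊥ := by simpa using hnot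
  obtain ⟨ε, hε, hgap⟩ := hAc.exists_pos_forall_add_lt hf hg hfg
  have hfh_loc : ∀ x ∈ A, ∃ M : ℝ, ∀ᶠ y in 𝓝 x, f y + h y ≤ M := fun x hx => by
    obtain ⟨c, hfc, -⟩ := EReal.exists_between_coe_real ((hfg x hx).trans_le le_top)
    obtain ⟨M, hM⟩ := hloc x
    refine ⟨c + M, ?_⟩
    filter_upwards [hf.continuousAt.eventually (gt_mem_nhds hfc), hM] with y hfy hhy
    exact EReal.coe_add c M ▸ add_le_add hfy.le hhy
  obtain ⟨C, hC⟩ := hAc.exists_forall_le_coe_of_eventually_le hfh_loc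
  have hbot : ⨆ t ∈ B, (g t + h t) ≠ ⊥ :=
    ne_bot_of_le_ne_bot (EReal.add_eq_bot_iff.not.2 (by simp [(hfg t₀ ht₀A).ne_bot, ht₀]))
      (le_biSup (fun t => g t + h t) (hAB ht₀A))
  refine EReal.lt_of_le_coe_of_le_sub hε hbot (iSup₂_le hC) (iSup₂_le fun t ht => ?_)
  rw [EReal.le_sub_iff_add_le (.inl (EReal.coe_ne_bot ε)) (.inl (EReal.coe_ne_top ε))]
  calc f t + h t + ε = (f t + ε) + h t := add_right_comm _ _ _
    _ ≤ g t + h t := add_le_add_left (hgap t ht).le _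
    _ ≤ ⨆ t ∈ B, (g t + h t) := le_biSup (fun t => g t + h t) (hAB ht)

theorem trivial_lemma_continuous {D : Type*} [TopologicalSpace D] [T2Space D]
    (f g h : D → EReal)
    (hf : Continuous f) (hg : Continuous g)
    (hfne : ∀ x, f x ≠ ⊤) (hgne : ∀ x, g x ≠ ⊤) (hhne : ∀ x, h x ≠ ⊤)
    (hloc : ∀ x : D, ∃ M : ℝ, ∀ᶠ y in 𝓝 x, h y ≤ (M : EReal))
    (A B : Set D) (hAB : A ⊆ B) (hA : A.Nonempty) (hAc : IsCompact A)
    (hfg : ∀ t ∈ A, f t < g t)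
    (hnot : ¬ ∀ t ∈ A, h t = ⊥) :
    (⨆ t ∈ A, (f t + h t)) < ⨆ t ∈ B, (g t + h t) :=
  trivial_lemma_continuous_general f g h hf hg hloc A B hAB hAc hfg hnot
end

section
/- Let K : ℝ → ℝ ∪ {−∞} be 1-periodic, finite and concave on (0,1) (extended continuously to endpoints with possibly K(0) = −∞). Let 0 ≤ α < a < b < β ≤ 1 and p, q > 0 with p(a−α) = q(β−b). Then for every t ∈ [0,α] ∪ [β,1], p·K(t−α) + q·K(t−β) ≤ p·K(t−a) + q·K(t−b). -/
/-!
The nodes `t - β < t - b < t - a < t - α` lie in `[0, 1]`, after a shift by one period when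
`t ≤ α`. By concavity, `K` lies below the line through its chord over `[t - b, t - a]` at the
two outer nodes; continuity at `0` and `1` extends this to the endpoints, where `K` may be `-∞`.
Replacing the outer values by that line changes the weighted sum by
`m (p (a - α) - q (β - b)) = 0`, `m` being the slope of the chord.
-/

open Filter Topology Set

section Slope

variable {𝕜 : Type*} [Field 𝕜] [LinearOrder 𝕜] [IsStrictOrderedRing 𝕜] {s : Set 𝕜} {f : 𝕜 → 𝕜}
  {u x y w : 𝕜}

theorem ConcaveOn.le_sub_slope_mul_of_lt (hf : ConcaveOn 𝕜 s f) (hu : u ∈ s) (hy : y ∈ s)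
    (hux : u < x) (hxy : x < y) : f u ≤ f x - (f y - f x) / (y - x) * (x - u) := by
  have hslope := hf.slope_anti_adjacent hu hy hux hxy
  rw [le_div_iff₀ (sub_pos.2 hux)] at hslope
  linarith

theorem ConcaveOn.le_add_slope_mul_of_lt (hf : ConcaveOn 𝕜 s f) (hx : x ∈ s) (hw : w ∈ s)
    (hxy : x < y) (hyw : y < w) : f w ≤ f y + (f y - f x) / (y - x) * (w - y) := by
  have hslope := hf.slope_anti_adjacent hx hw hxy hyw
  rw [div_le_iff₀ (sub_pos.2 hyw)] at hslope
  linarith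

end Slope

section ConcaveOnUnitInterval

variable {K : ℝ → EReal} {g : ℝ → ℝ} {u x y w : ℝ}

theorem le_sub_slope_mul_of_mem_Ico (hg : ConcaveOn ℝ (Ioo 0 1) g)
    (hK : ∀ t ∈ Ioo (0 : ℝ) 1, K t = g t) (h0 : Tendsto K (𝓝[>] 0) (𝓝 (K 0)))
    (hu : u ∈ Ico 0 x) (hxy : x < y) (hy : y < 1) :
    K u ≤ ↑(g x - (g y - g x) / (y - x) * (x - u)) := by
  have hy01 : y ∈ Ioo (0 : ℝ) 1 := ⟨hu.1.trans_lt (hu.2.trans hxy), hy⟩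
  have hbound : ∀ v ∈ Ioo 0 x, K v ≤ ↑(g x - (g y - g x) / (y - x) * (x - v)) := by
    intro v hv
    rw [hK v ⟨hv.1, hv.2.trans (hxy.trans hy)⟩, EReal.coe_le_coe_iff]
    exact hg.le_sub_slope_mul_of_lt ⟨hv.1, hv.2.trans (hxy.trans hy)⟩ hy01 hv.2 hxy
  rcases hu.1.eq_or_lt with rfl | hu0
  · refine ContinuousWithinAt.closure_le (by simp [closure_Ioo (hu.2.ne), hu.2.le])
      (h0.mono_left (nhdsWithin_mono _ Ioo_subset_Ioi_self)) ?_ hbound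
    exact (continuous_coe_real_ereal.comp (by fun_prop)).continuousWithinAt
  · exact hbound u ⟨hu0, hu.2⟩

theorem le_add_slope_mul_of_mem_Ioc (hg : ConcaveOn ℝ (Ioo 0 1) g)
    (hK : ∀ t ∈ Ioo (0 : ℝ) 1, K t = g t) (h1 : Tendsto K (𝓝[<] 1) (𝓝 (K 1)))
    (hx : 0 < x) (hxy : x < y) (hw : w ∈ Ioc y 1) :
    K w ≤ ↑(g y + (g y - g x) / (y - x) * (w - y)) := by
  have hx01 : x ∈ Ioo (0 : ℝ) 1 := ⟨hx, hxy.trans (hw.1.trans_le hw.2)⟩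
  have hbound : ∀ v ∈ Ioo y 1, K v ≤ ↑(g y + (g y - g x) / (y - x) * (v - y)) := by
    intro v hv
    rw [hK v ⟨hx.trans (hxy.trans hv.1), hv.2⟩, EReal.coe_le_coe_iff]
    exact hg.le_add_slope_mul_of_lt hx01 ⟨hx.trans (hxy.trans hv.1), hv.2⟩ hxy hv.1
  rcases hw.2.eq_or_lt with rfl | hw1
  · refine ContinuousWithinAt.closure_le (by simp [closure_Ioo (hw.1.ne), hw.1.le])
      (h1.mono_left (nhdsWithin_mono _ Ioo_subset_Iio_self)) ?_ hbound
    exact (continuous_coe_real_ereal.comp (by fun_prop)).continuousWithinAt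
  · exact hbound w ⟨hw.1, hw1⟩

theorem mul_add_mul_le_of_concaveOn_Ioo (hg : ConcaveOn ℝ (Ioo 0 1) g)
    (hK : ∀ t ∈ Ioo (0 : ℝ) 1, K t = g t) (h0 : Tendsto K (𝓝[>] 0) (𝓝 (K 0)))
    (h1 : Tendsto K (𝓝[<] 1) (𝓝 (K 1))) {p q x₁ x₂ x₃ x₄ : ℝ} (hp : 0 ≤ p) (hq : 0 ≤ q)
    (h₁ : 0 ≤ x₁) (h₁₂ : x₁ < x₂) (h₂₃ : x₂ < x₃) (h₃₄ : x₃ < x₄) (h₄ : x₄ ≤ 1)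
    (hμ : p * (x₄ - x₃) = q * (x₂ - x₁)) :
    (p : EReal) * K x₄ + q * K x₁ ≤ p * K x₃ + q * K x₂ := by
  set m := (g x₃ - g x₂) / (x₃ - x₂)
  have hK₁ := le_sub_slope_mul_of_mem_Ico hg hK h0 ⟨h₁, h₁₂⟩ h₂₃ (h₃₄.trans_le h₄)
  have hK₄ := le_add_slope_mul_of_mem_Ioc hg hK h1 (h₁.trans_lt h₁₂) h₂₃ ⟨h₃₄, h₄⟩
  calc (p : EReal) * K x₄ + q * K x₁
      ≤ p * ↑(g x₃ + m * (x₄ - x₃)) + q * ↑(g x₂ - m * (x₂ - x₁)) := by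
        gcongr
    _ = ↑(p * g x₃ + q * g x₂) := by
        norm_cast
        linear_combination m * hμ
    _ = p * K x₃ + q * K x₂ := by
        rw [hK x₃ ⟨by linarith, by linarith⟩, hK x₂ ⟨by linarith, by linarith⟩]
        norm_cast

end ConcaveOnUnitInterval

theorem perturbation_lemma_outside
    (K : ℝ → EReal)
    (hper : ∀ t : ℝ, K (t - 1) = K t)
    (hconc : ∃ g : ℝ → ℝ, ConcaveOn ℝ (Set.Ioo (0 : ℝ) 1) g ∧
      ∀ t ∈ Set.Ioo (0 : ℝ) 1, K t = (g t : EReal))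
    (h0 : Tendsto K (𝓝[>] (0 : ℝ)) (𝓝 (K 0)))
    (h1 : Tendsto K (𝓝[<] (1 : ℝ)) (𝓝 (K 1)))
    (α a b β p q : ℝ)
    (hα : 0 ≤ α) (hαa : α < a) (hab : a < b) (hbβ : b < β) (hβ : β ≤ 1)
    (hp : 0 < p) (hq : 0 < q)
    (hμ : p * (a - α) = q * (β - b)) :
    ∀ t ∈ Set.Icc (0 : ℝ) α ∪ Set.Icc β 1,
      (p : EReal) * K (t - α) + (q : EReal) * K (t - β) ≤
        (p : EReal) * K (t - a) + (q : EReal) * K (t - b) := by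
  obtain ⟨g, hg, hK⟩ := hconc
  have key := fun {s : ℝ} (hs₁ : 0 ≤ s - β) (hs₄ : s - α ≤ 1) =>
    mul_add_mul_le_of_concaveOn_Ioo hg hK h0 h1 hp.le hq.le hs₁ (by linarith) (by linarith)
      (by linarith) hs₄ (by linarith : p * (s - α - (s - a)) = q * (s - b - (s - β)))
  rintro t (⟨ht₀, htα⟩ | ⟨htβ, ht₁⟩)
  · have shift : ∀ c, K (t - c) = K (t + 1 - c) := fun c => by
      rw [← hper (t + 1 - c)]
      ring_nf
    rw [shift α, shift β, shift a, shift b]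
    exact key (by linarith) (by linarith)
  · exact key (by linarith) (by linarith)
end

section
/- Let K(t) = log|sin(πt)| and nodes y₁ = 7/12, y₂ = 11/12. Then f(y,t) = K(t−7/12) + K(t−11/12) satisfies f(y,0) = f(y,1/2) = f(y,3/4) = −2 log 2. -/
/-!
The two nodes are a third of a period apart, so by the product-to-sum formula
`sin(π(t - 7/12)) · sin(π(t - 11/12)) = (1 + 2 sin 2πt) / 4`.
At `t = 0` and `t = 1/2` we have `sin 2πt = 0`, and at `t = 3/4` we have `sin 2πt = -1`;
in all three cases the product has absolute value `1/4`, whose logarithm is `-2 log 2`.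
-/

open Real

lemma cos_sub_three_pi_div_two (x : ℝ) : cos (x - 3 * π / 2) = -sin x := by
  rw [show x - 3 * π / 2 = x - π / 2 - π by ring, cos_sub_pi, cos_sub_pi_div_two]

lemma sin_mul_sin_nodes (t : ℝ) :
    sin (π * (t - 7 / 12)) * sin (π * (t - 11 / 12)) = (1 + 2 * sin (2 * π * t)) / 4 := by
  have h := two_mul_sin_mul_sin (π * (t - 7 / 12)) (π * (t - 11 / 12))
  rw [show π * (t - 7 / 12) - π * (t - 11 / 12) = π / 3 by ring,
    show π * (t - 7 / 12) + π * (t - 11 / 12) = 2 * π * t - 3 * π / 2 by ring,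
    cos_pi_div_three, cos_sub_three_pi_div_two] at h
  linarith

lemma log_abs_add_log_abs_of_abs_mul_eq_quarter {x y : ℝ} (h : |x * y| = 1 / 4) :
    log |x| + log |y| = -2 * log 2 := by
  have hxy : x * y ≠ 0 := fun h0 => by norm_num [h0] at h
  rw [log_abs, log_abs, ← log_mul (left_ne_zero_of_mul hxy) (right_ne_zero_of_mul hxy),
    ← log_abs, h, one_div, log_inv, show (4 : ℝ) = 2 ^ 2 by norm_num, log_pow]
  push_cast
  ring

lemma log_abs_sin_nodes_eq (t : ℝ) (ht : sin (2 * π * t) = 0 ∨ sin (2 * π * t) = -1) :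
    log |sin (π * (t - 7 / 12))| + log |sin (π * (t - 11 / 12))| = -2 * log 2 := by
  apply log_abs_add_log_abs_of_abs_mul_eq_quarter
  rw [sin_mul_sin_nodes]
  rcases ht with ht | ht <;> norm_num [ht]

theorem minimax_configuration_values :
    Real.log |Real.sin (π * ((0 : ℝ) - 7 / 12))| +
        Real.log |Real.sin (π * ((0 : ℝ) - 11 / 12))| = -2 * Real.log 2 ∧
    Real.log |Real.sin (π * ((1 : ℝ) / 2 - 7 / 12))| +
        Real.log |Real.sin (π * ((1 : ℝ) / 2 - 11 / 12))| = -2 * Real.log 2 ∧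
    Real.log |Real.sin (π * ((3 : ℝ) / 4 - 7 / 12))| +
        Real.log |Real.sin (π * ((3 : ℝ) / 4 - 11 / 12))| = -2 * Real.log 2 := by
  refine ⟨log_abs_sin_nodes_eq 0 ?_, log_abs_sin_nodes_eq (1 / 2) ?_,
    log_abs_sin_nodes_eq (3 / 4) ?_⟩
  · left
    simp
  · left
    rw [show 2 * π * (1 / 2) = π by ring, sin_pi]
  · right
    rw [show 2 * π * (3 / 4) = π / 2 + π by ring, sin_add_pi, sin_pi_div_two]
end

section
/- Let K(t) = log|sin(πt)| and let the nodes be y₁ = (x−z)/2, y₂ = (x+z)/2 with 1 ≤ x < 3/2 and cos(πz) = (1 + cos(πx))/2, 0 ≤ z ≤ 2−x. Then f(y, x/2) = f(y, 1) = −2 log 2 + log(1 − cos(πx)). -/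
/-!
With `y₁ = (x - z)/2`, `y₂ = (x + z)/2`, the product-to-sum formula gives
`log |sin π(t - y₁)| + log |sin π(t - y₂)| = -log 2 + log |cos πz - cos π(2t - x)|`.
At `t = x/2` the second cosine is `1` and at `t = 1` it is `cos πx`; the constraint
`cos πz = (1 + cos πx)/2` puts `cos πz` at the midpoint of these two values, so both
differences have absolute value `(1 - cos πx)/2`.
-/

open Real

theorem log_abs_sin_add_log_abs_sin {a b : ℝ} (h : cos (a - b) ≠ cos (a + b)) :
    log |sin a| + log |sin b| = -log 2 + log |cos (a - b) - cos (a + b)| := by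
  have hprod : sin a * sin b ≠ 0 := by
    intro h0
    have := two_mul_sin_mul_sin a b
    rw [mul_assoc, h0, mul_zero] at this
    exact h (sub_eq_zero.mp this.symm)
  rw [← two_mul_sin_mul_sin, mul_assoc, abs_mul, abs_two,
    log_mul two_ne_zero (abs_ne_zero.mpr hprod), abs_mul, log_mul (abs_ne_zero.mpr (left_ne_zero_of_mul hprod))
      (abs_ne_zero.mpr (right_ne_zero_of_mul hprod))]
  ring

theorem log_abs_sin_sub_nodes {x z t : ℝ} (h : cos (π * z) ≠ cos (π * (2 * t - x))) :
    log |sin (π * (t - (x - z) / 2))| + log |sin (π * (t - (x + z) / 2))| =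
      -log 2 + log |cos (π * z) - cos (π * (2 * t - x))| := by
  rw [log_abs_sin_add_log_abs_sin] <;> ring_nf at h ⊢
  assumption

theorem neg_log_two_add_log_abs_half_one_sub {c : ℝ} (hc : c < 1) :
    -log 2 + log |(1 - c) / 2| = -2 * log 2 + log (1 - c) := by
  rw [abs_of_pos (by linarith), log_div (by linarith) two_ne_zero]
  ring

theorem equioscillation_family_values_general (x z : ℝ)
    (hx1 : 1 ≤ x) (hx2 : x < 3 / 2)
    (hz : Real.cos (π * z) = (1 + Real.cos (π * x)) / 2) :
    Real.log |Real.sin (π * (x / 2 - (x - z) / 2))| +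
        Real.log |Real.sin (π * (x / 2 - (x + z) / 2))| =
      -2 * Real.log 2 + Real.log (1 - Real.cos (π * x)) ∧
    Real.log |Real.sin (π * ((1 : ℝ) - (x - z) / 2))| +
        Real.log |Real.sin (π * ((1 : ℝ) - (x + z) / 2))| =
      -2 * Real.log 2 + Real.log (1 - Real.cos (π * x)) := by
  have hcos : cos (π * x) < 1 := by
    have : cos (π * x) ≤ 0 :=
      cos_nonpos_of_pi_div_two_le_of_le (by nlinarith [pi_pos]) (by nlinarith [pi_pos])
    linarith
  have hleft : cos (π * (2 * (x / 2) - x)) = 1 := by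
    rw [show 2 * (x / 2) - x = 0 by ring, mul_zero, cos_zero]
  have hright : cos (π * (2 * 1 - x)) = cos (π * x) := by
    rw [show π * (2 * 1 - x) = 2 * π - π * x by ring, cos_two_pi_sub]
  constructor
  · rw [log_abs_sin_sub_nodes (by rw [hleft, hz]; linarith), hleft, hz,
      show (1 + cos (π * x)) / 2 - 1 = -((1 - cos (π * x)) / 2) by ring, abs_neg,
      neg_log_two_add_log_abs_half_one_sub hcos]
  · rw [log_abs_sin_sub_nodes (by rw [hright, hz]; linarith), hright, hz,
      show (1 + cos (π * x)) / 2 - cos (π * x) = (1 - cos (π * x)) / 2 by ring,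
      neg_log_two_add_log_abs_half_one_sub hcos]

theorem equioscillation_family_values (x z : ℝ)
    (hx1 : 1 ≤ x) (hx2 : x < 3 / 2)
    (hz0 : 0 ≤ z) (hz1 : z ≤ 2 - x)
    (hz : Real.cos (π * z) = (1 + Real.cos (π * x)) / 2) :
    Real.log |Real.sin (π * (x / 2 - (x - z) / 2))| +
        Real.log |Real.sin (π * (x / 2 - (x + z) / 2))| =
      -2 * Real.log 2 + Real.log (1 - Real.cos (π * x)) ∧
    Real.log |Real.sin (π * ((1 : ℝ) - (x - z) / 2))| +
        Real.log |Real.sin (π * ((1 : ℝ) - (x + z) / 2))| =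
      -2 * Real.log 2 + Real.log (1 - Real.cos (π * x)) :=
  equioscillation_family_values_general x z hx1 hx2 hz
end

section
/- For x ∈ [1, 3/2], the equation cos(πz) = (1 + cos(πx))/2 has a unique solution z ∈ [0, 2−x], and the resulting equioscillation value −2 log 2 + log(1 − cos(πx)) is strictly decreasing in x on [1, 3/2], with maximum value −log 2 at x = 1 and minimum value −2 log 2 at x = 3/2. -/
/-!
On `[0, 1]` the map `z ↦ cos (π z)` decreases strictly from `1` to `-1`, and for `x ∈ [1, 3/2]`
the target `(1 + cos (π x)) / 2` lies between `cos (π (2 - x)) = cos (π x)` and `1`, so the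
intermediate value theorem and injectivity give the unique `z`. On `[1, 2)` the map
`x ↦ cos (π x)` increases strictly and stays below `1`, so `log (1 - cos (π x))` decreases.
-/

open Real Set

theorem strictAntiOn_cos_pi_mul : StrictAntiOn (fun z : ℝ => cos (π * z)) (Icc 0 1) := by
  intro a ⟨ha0, ha1⟩ b ⟨hb0, hb1⟩ hab
  have hmem : ∀ w : ℝ, 0 ≤ w → w ≤ 1 → π * w ∈ Icc 0 π := fun w h0 h1 =>
    ⟨by positivity, by nlinarith [pi_pos]⟩
  exact strictAntiOn_cos (hmem a ha0 ha1) (hmem b hb0 hb1) (by gcongr)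

theorem cos_pi_mul_two_sub (x : ℝ) : cos (π * (2 - x)) = cos (π * x) := by
  rw [show π * (2 - x) = 2 * π - π * x by ring, cos_two_pi_sub]

theorem strictMonoOn_cos_pi_mul : StrictMonoOn (fun x : ℝ => cos (π * x)) (Icc 1 2) := by
  intro a ⟨ha1, ha2⟩ b ⟨hb1, hb2⟩ hab
  have := strictAntiOn_cos_pi_mul (⟨by linarith, by linarith⟩ : 2 - b ∈ Icc 0 1)
    (⟨by linarith, by linarith⟩ : 2 - a ∈ Icc 0 1) (by linarith)
  simpa only [cos_pi_mul_two_sub] using this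

theorem existsUnique_cos_pi_mul_eq {a c : ℝ} (ha0 : 0 ≤ a) (ha1 : a ≤ 1)
    (hc : c ∈ Icc (cos (π * a)) 1) : ∃! z : ℝ, z ∈ Icc 0 a ∧ cos (π * z) = c := by
  have hcont : ContinuousOn (fun z : ℝ => cos (π * z)) (Icc 0 a) := by fun_prop
  obtain ⟨z, hz, hcz⟩ := intermediate_value_Icc' ha0 hcont (by simpa using hc)
  have hsub : Icc 0 a ⊆ Icc 0 1 := Icc_subset_Icc_right ha1
  refine ⟨z, ⟨hz, hcz⟩, fun y ⟨hy, hcy⟩ => ?_⟩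
  exact strictAntiOn_cos_pi_mul.injOn (hsub hy) (hsub hz) (hcy.trans hcz.symm)

theorem strictAntiOn_log_one_sub_cos_pi_mul :
    StrictAntiOn (fun x : ℝ => log (1 - cos (π * x))) (Ico 1 2) := by
  intro a ha b hb hab
  have hsub : Ico (1 : ℝ) 2 ⊆ Icc 1 2 := Ico_subset_Icc_self
  have hcos : cos (π * a) < cos (π * b) := strictMonoOn_cos_pi_mul (hsub ha) (hsub hb) hab
  have hcos_lt_one : cos (π * b) < 1 := by
    have : cos (π * b) < cos (π * 2) :=
      strictMonoOn_cos_pi_mul (hsub hb) (right_mem_Icc.2 one_le_two) hb.2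
    rwa [mul_comm π 2, cos_two_pi] at this
  exact log_lt_log (by linarith) (by linarith)

theorem equioscillation_values_monotone :
    (∀ x ∈ Set.Icc (1 : ℝ) (3 / 2),
      ∃! z : ℝ, z ∈ Set.Icc (0 : ℝ) (2 - x) ∧
        Real.cos (π * z) = (1 + Real.cos (π * x)) / 2) ∧
    StrictAntiOn (fun x : ℝ => -2 * Real.log 2 + Real.log (1 - Real.cos (π * x)))
      (Set.Icc (1 : ℝ) (3 / 2)) ∧
    (-2 * Real.log 2 + Real.log (1 - Real.cos (π * 1)) = -Real.log 2) ∧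
    (-2 * Real.log 2 + Real.log (1 - Real.cos (π * (3 / 2))) = -2 * Real.log 2) := by
  refine ⟨fun x ⟨hx1, hx2⟩ => ?_, ?_, ?_, ?_⟩
  · refine existsUnique_cos_pi_mul_eq (by linarith) (by linarith) ⟨?_, ?_⟩ <;>
      linarith [cos_pi_mul_two_sub x, cos_le_one (π * x), neg_one_le_cos (π * x)]
  · exact (strictAntiOn_log_one_sub_cos_pi_mul.mono
      (Icc_subset_Ico_right (by norm_num))).const_add _
  · rw [mul_one, cos_pi, sub_neg_eq_add, one_add_one_eq_two]
    ring
  · rw [show π * (3 / 2) = π / 2 + π by ring, cos_add_pi, cos_pi_div_two]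
    norm_num
end
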